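/- Soundness and completeness of the typed embeddings: for every term t of the λ-calculus with explicit substitutions, (1) Γ ⊢ t : σ is derivable in the CBN type system N if and only if Γ ⊢ cbn(t) : σ is derivable in system U for the λ!-calculus; (2) Γ ⊢ t : σ is derivable in the CBV type system V if and only if Γ ⊢ cbv(t) : σ is derivable in system U. -/
import Mathlib


/-! # The Bang Calculus Revisited: common definitions.

Terms are represented with de Bruijn indices, so that all the meta-level
substitutions are capture-avoiding by construction. -/

/-- Terms of the λ!-calculus.  `esub t u` is the explicit substitution
`t[0\u]`: the (anonymous) binder scopes over `t`, not over `u`. -/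
inductive Tm : Type
  | var : ℕ → Tm
  | app : Tm → Tm → Tm
  | lam : Tm → Tm
  | bang : Tm → Tm
  | der : Tm → Tm
  | esub : Tm → Tm → Tm
  deriving DecidableEq

namespace Tm

/-- lifting a renaming under a binder -/
def liftR (f : ℕ → ℕ) : ℕ → ℕ
  | 0 => 0
  | k + 1 => f k + 1

/-- renaming of free variables -/
def rename (f : ℕ → ℕ) : Tm → Tm
  | var k => var (f k)
  | app t u => app (rename f t) (rename f u)
  | lam t => lam (rename (liftR f) t)
  | bang t => bang (rename f t)
  | der t => der (rename f t)
  | esub t u => esub (rename (liftR f) t) (rename f u)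

/-- lifting a simultaneous substitution under a binder -/
def liftS (σ : ℕ → Tm) : ℕ → Tm
  | 0 => var 0
  | k + 1 => rename (· + 1) (σ k)

/-- simultaneous (capture-avoiding) substitution -/
def subst (σ : ℕ → Tm) : Tm → Tm
  | var k => σ k
  | app t u => app (subst σ t) (subst σ u)
  | lam t => lam (subst (liftS σ) t)
  | bang t => bang (subst σ t)
  | der t => der (subst σ t)
  | esub t u => esub (subst (liftS σ) t) (subst σ u)

/-- capture-avoiding substitution of `u` for the variable `0` of `t`,
where the result is placed under `n` extra binders (and `u` already lives
at that depth). -/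
def substIn (n : ℕ) (u : Tm) (t : Tm) : Tm :=
  subst (fun k => match k with
    | 0 => u
    | k + 1 => var (k + n)) t

/-- capture-avoiding meta-level substitution `t{0 := u}` -/
def subst0 (u : Tm) (t : Tm) : Tm := substIn 0 u t

/-- plugging a term into a list context `L ::= ◻ | L[x\t]`; the head of the
list is the argument of the outermost explicit substitution. -/
def plug : List Tm → Tm → Tm
  | [], s => s
  | e :: L, s => esub (plug L s) e

/-- the w-size of a term -/
def wsize : Tm → ℕ
  | var _ => 0
  | app t u => 1 + wsize t + wsize u
  | lam t => 1 + wsize t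
  | bang _ => 0
  | der t => 1 + wsize t
  | esub t u => 1 + wsize t + wsize u

end Tm

/-- the names of the three rewriting rules of the λ!-calculus -/
inductive Rule : Type
  | dB | sb | db
  deriving DecidableEq

open Tm in
/-- the three rewriting rules, applied at the root (at a distance) -/
inductive Root : Rule → Tm → Tm → Prop
  | dB (L : List Tm) (t u : Tm) :
      Root .dB (app (plug L (lam t)) u)
               (plug L (esub t (rename (· + L.length) u)))
  | sb (L : List Tm) (t u : Tm) :
      Root .sb (esub t (plug L (bang u))) (plug L (substIn L.length u t))
  | db (L : List Tm) (t : Tm) :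
      Root .db (der (plug L (bang t))) (plug L t)

/-- closure of each rule under weak contexts (no reduction under `bang`) -/
inductive Step : Rule → Tm → Tm → Prop
  | root {r : Rule} {t t' : Tm} : Root r t t' → Step r t t'
  | appL {r t t'} (u : Tm) : Step r t t' → Step r (Tm.app t u) (Tm.app t' u)
  | appR {r u u'} (t : Tm) : Step r u u' → Step r (Tm.app t u) (Tm.app t u')
  | lam {r t t'} : Step r t t' → Step r (Tm.lam t) (Tm.lam t')
  | der {r t t'} : Step r t t' → Step r (Tm.der t) (Tm.der t')
  | esubL {r t t'} (u : Tm) : Step r t t' → Step r (Tm.esub t u) (Tm.esub t' u)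
  | esubR {r u u'} (t : Tm) : Step r u u' → Step r (Tm.esub t u) (Tm.esub t u')

/-- the weak reduction `→w` of the λ!-calculus -/
def StepW (t t' : Tm) : Prop := ∃ r, Step r t t'

/-- counted weak reduction: `RedCnt t (b, e) u` holds iff `t →w* u` using `b`
dB-steps and `e` steps of kind s!/d!. -/
inductive RedCnt : Tm → ℕ × ℕ → Tm → Prop
  | refl (t : Tm) : RedCnt t (0, 0) t
  | db {t t₁ u : Tm} {b e : ℕ} :
      Step .dB t t₁ → RedCnt t₁ (b, e) u → RedCnt t (b + 1, e) u
  | ex {t t₁ u : Tm} {b e : ℕ} :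
      (Step .sb t t₁ ∨ Step .db t t₁) → RedCnt t₁ (b, e) u →
      RedCnt t (b, e + 1) u

mutual
  /-- neutral w-normal terms -/
  inductive NeW : Tm → Prop
    | var (k : ℕ) : NeW (Tm.var k)
    | app {t u : Tm} : NaW t → NoW u → NeW (Tm.app t u)
    | der {t : Tm} : NbW t → NeW (Tm.der t)
    | esub {t u : Tm} : NeW t → NbW u → NeW (Tm.esub t u)
  /-- neutral-abs w-normal terms -/
  inductive NaW : Tm → Prop
    | bang (t : Tm) : NaW (Tm.bang t)
    | ne {t : Tm} : NeW t → NaW t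
    | esub {t u : Tm} : NaW t → NbW u → NaW (Tm.esub t u)
  /-- neutral-bang w-normal terms -/
  inductive NbW : Tm → Prop
    | ne {t : Tm} : NeW t → NbW t
    | lam {t : Tm} : NoW t → NbW (Tm.lam t)
    | esub {t u : Tm} : NbW t → NbW u → NbW (Tm.esub t u)
  /-- w-normal terms -/
  inductive NoW : Tm → Prop
    | na {t : Tm} : NaW t → NoW t
    | nb {t : Tm} : NbW t → NoW t
end

/-- clashes -/
inductive Clash : Tm → Prop
  | appBang (L : List Tm) (t u : Tm) : Clash (Tm.app (Tm.plug L (Tm.bang t)) u)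
  | esubLam (L : List Tm) (t u : Tm) : Clash (Tm.esub t (Tm.plug L (Tm.lam u)))
  | derLam (L : List Tm) (u : Tm) : Clash (Tm.der (Tm.plug L (Tm.lam u)))
  | appLam (L : List Tm) (t u : Tm) : Clash (Tm.app t (Tm.plug L (Tm.lam u)))

/-- `WSub t s` holds iff `t = W⟨s⟩` for some weak context `W` -/
inductive WSub : Tm → Tm → Prop
  | refl (t : Tm) : WSub t t
  | appL {t s : Tm} (u : Tm) : WSub t s → WSub (Tm.app t u) s
  | appR {u s : Tm} (t : Tm) : WSub u s → WSub (Tm.app t u) s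
  | lam {t s : Tm} : WSub t s → WSub (Tm.lam t) s
  | der {t s : Tm} : WSub t s → WSub (Tm.der t) s
  | esubL {t s : Tm} (u : Tm) : WSub t s → WSub (Tm.esub t u) s
  | esubR {u s : Tm} (t : Tm) : WSub u s → WSub (Tm.esub t u) s

/-- weak clash freeness -/
def Wcf (t : Tm) : Prop := ¬ ∃ s, WSub t s ∧ Clash s

mutual
  /-- neutral weak clash free normal terms -/
  inductive NeCF : Tm → Prop
    | var (k : ℕ) : NeCF (Tm.var k)
    | app {t u : Tm} : NeCF t → NaCF u → NeCF (Tm.app t u)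
    | der {t : Tm} : NeCF t → NeCF (Tm.der t)
    | esub {t u : Tm} : NeCF t → NeCF u → NeCF (Tm.esub t u)
  /-- neutral-abs weak clash free normal terms -/
  inductive NaCF : Tm → Prop
    | bang (t : Tm) : NaCF (Tm.bang t)
    | ne {t : Tm} : NeCF t → NaCF t
    | esub {t u : Tm} : NaCF t → NeCF u → NaCF (Tm.esub t u)
  /-- neutral-bang weak clash free normal terms -/
  inductive NbCF : Tm → Prop
    | ne {t : Tm} : NeCF t → NbCF t
    | lam {t : Tm} : NoCF t → NbCF (Tm.lam t)
    | esub {t u : Tm} : NbCF t → NeCF u → NbCF (Tm.esub t u)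
  /-- weak clash free normal terms -/
  inductive NoCF : Tm → Prop
    | na {t : Tm} : NaCF t → NoCF t
    | nb {t : Tm} : NbCF t → NoCF t
end

/-- Types of system 𝒰: base types, multiset types and arrow types.  A
multiset type is given by a list of types (a representative of the multiset
it determines). -/
inductive Ty : Type
  | base : ℕ → Ty
  | mult : List Ty → Ty
  | arr : List Ty → Ty → Ty

/-- typing contexts: functions from (de Bruijn) variables to multiset types -/
abbrev Ctx := ℕ → Multiset Ty

/-- the context mapping `k` to `M` and anything else to the empty multiset -/
def Ctx.single (k : ℕ) (M : Multiset Ty) : Ctx := fun j => if j = k then M else 0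

/-- removing the (type of the) bound variable `0` from a context -/
def Ctx.tail (Γ : Ctx) : Ctx := fun k => Γ (k + 1)

/-- extending a context with a multiset type for a fresh variable `0` -/
def Ctx.cons (M : Multiset Ty) (Γ : Ctx) : Ctx := fun k =>
  match k with
  | 0 => M
  | k + 1 => Γ k

/-- Sized typing of system 𝒰: `DerU Γ t τ n` means that there is a derivation
of `Γ ⊢ t : τ` whose size (number of rules, not counting `bg`) is `n`. -/
inductive DerU : Ctx → Tm → Ty → ℕ → Prop
  | ax (k : ℕ) (σ : Ty) : DerU (Ctx.single k {σ}) (Tm.var k) σ 1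
  | app {Γ Δ : Ctx} {t u : Tm} {M : List Ty} {τ : Ty} {n m : ℕ} :
      DerU Γ t (Ty.arr M τ) n → DerU Δ u (Ty.mult M) m →
      DerU (Γ + Δ) (Tm.app t u) τ (n + m + 1)
  | abs {Γ : Ctx} {t : Tm} {τ : Ty} {n : ℕ} (M : List Ty) :
      DerU Γ t τ n → Multiset.ofList M = Γ 0 →
      DerU (Ctx.tail Γ) (Tm.lam t) (Ty.arr M τ) (n + 1)
  | es {Γ Δ : Ctx} {t u : Tm} {σ : Ty} {M : List Ty} {n m : ℕ} :
      DerU Γ t σ n → DerU Δ u (Ty.mult M) m → Multiset.ofList M = Γ 0 →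
      DerU (Ctx.tail Γ + Δ) (Tm.esub t u) σ (n + m + 1)
  | bg {t : Tm} (prs : List (Ctx × Ty × ℕ)) :
      (∀ p ∈ prs, DerU p.1 t p.2.1 p.2.2) →
      DerU ((prs.map (·.1)).sum) (Tm.bang t)
           (Ty.mult (prs.map (·.2.1))) ((prs.map (·.2.2)).sum)
  | dr {Γ : Ctx} {t : Tm} {σ : Ty} {n : ℕ} :
      DerU Γ t (Ty.mult [σ]) n → DerU Γ (Tm.der t) σ (n + 1)

/-! ## The source λ-calculus with explicit substitutions (CBN / CBV) -/

/-- terms of the λ-calculus with explicit substitutions (de Bruijn) -/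
inductive Lm : Type
  | var : ℕ → Lm
  | app : Lm → Lm → Lm
  | lam : Lm → Lm
  | esub : Lm → Lm → Lm
  deriving DecidableEq

namespace Lm

def liftR (f : ℕ → ℕ) : ℕ → ℕ
  | 0 => 0
  | k + 1 => f k + 1

def rename (f : ℕ → ℕ) : Lm → Lm
  | var k => var (f k)
  | app t u => app (rename f t) (rename f u)
  | lam t => lam (rename (liftR f) t)
  | esub t u => esub (rename (liftR f) t) (rename f u)

def liftS (σ : ℕ → Lm) : ℕ → Lm
  | 0 => var 0
  | k + 1 => rename (· + 1) (σ k)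

def subst (σ : ℕ → Lm) : Lm → Lm
  | var k => σ k
  | app t u => app (subst σ t) (subst σ u)
  | lam t => lam (subst (liftS σ) t)
  | esub t u => esub (subst (liftS σ) t) (subst σ u)

def substIn (n : ℕ) (u : Lm) (t : Lm) : Lm :=
  subst (fun k => match k with
    | 0 => u
    | k + 1 => var (k + n)) t

/-- capture-avoiding meta-level substitution `t{0 := u}` -/
def subst0 (u : Lm) (t : Lm) : Lm := substIn 0 u t

def plug : List Lm → Lm → Lm
  | [], s => s
  | e :: L, s => esub (plug L s) e

/-- values -/
def IsVal : Lm → Prop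
  | var _ => True
  | lam _ => True
  | _ => False

/-- the n-size of a term -/
def nsize : Lm → ℕ
  | var _ => 0
  | lam t => 1 + nsize t
  | app t _ => 1 + nsize t
  | esub t _ => 1 + nsize t

/-- the v-size of a term -/
def vsize : Lm → ℕ
  | var _ => 0
  | lam _ => 0
  | app t u => 1 + vsize t + vsize u
  | esub t u => 1 + vsize t + vsize u

end Lm

/-- names of the CBN rules -/
inductive NRule : Type
  | dB | s
  deriving DecidableEq

/-- call-by-name reduction (closure of dB and s under CBN contexts) -/
inductive StepN : NRule → Lm → Lm → Prop
  | dB (L : List Lm) (t u : Lm) :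
      StepN .dB (Lm.app (Lm.plug L (Lm.lam t)) u)
                (Lm.plug L (Lm.esub t (Lm.rename (· + L.length) u)))
  | s (t u : Lm) : StepN .s (Lm.esub t u) (Lm.subst0 u t)
  | appL {r t t'} (u : Lm) : StepN r t t' → StepN r (Lm.app t u) (Lm.app t' u)
  | lam {r t t'} : StepN r t t' → StepN r (Lm.lam t) (Lm.lam t')
  | esubL {r t t'} (u : Lm) : StepN r t t' → StepN r (Lm.esub t u) (Lm.esub t' u)

/-- names of the CBV rules -/
inductive VRule : Type
  | dB | sv
  deriving DecidableEq

/-- call-by-value reduction (closure of dB and sv under CBV contexts) -/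
inductive StepV : VRule → Lm → Lm → Prop
  | dB (L : List Lm) (t u : Lm) :
      StepV .dB (Lm.app (Lm.plug L (Lm.lam t)) u)
                (Lm.plug L (Lm.esub t (Lm.rename (· + L.length) u)))
  | sv (L : List Lm) (t v : Lm) (hv : Lm.IsVal v) :
      StepV .sv (Lm.esub t (Lm.plug L v)) (Lm.plug L (Lm.substIn L.length v t))
  | appL {r t t'} (u : Lm) : StepV r t t' → StepV r (Lm.app t u) (Lm.app t' u)
  | appR {r u u'} (t : Lm) : StepV r u u' → StepV r (Lm.app t u) (Lm.app t u')
  | esubL {r t t'} (u : Lm) : StepV r t t' → StepV r (Lm.esub t u) (Lm.esub t' u)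
  | esubR {r u u'} (t : Lm) : StepV r u u' → StepV r (Lm.esub t u) (Lm.esub t u')

mutual
  /-- CBN neutral terms -/
  inductive NeN : Lm → Prop
    | var (k : ℕ) : NeN (Lm.var k)
    | app {t : Lm} (u : Lm) : NeN t → NeN (Lm.app t u)
  /-- CBN normal terms -/
  inductive NoN : Lm → Prop
    | lam {t : Lm} : NoN t → NoN (Lm.lam t)
    | ne {t : Lm} : NeN t → NoN t
end

mutual
  /-- CBV (substituted) variables -/
  inductive VrV : Lm → Prop
    | var (k : ℕ) : VrV (Lm.var k)
    | esub {t u : Lm} : VrV t → NeV u → VrV (Lm.esub t u)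
  /-- CBV neutral terms -/
  inductive NeV : Lm → Prop
    | app₁ {t u : Lm} : VrV t → NoV u → NeV (Lm.app t u)
    | app₂ {t u : Lm} : NeV t → NoV u → NeV (Lm.app t u)
    | esub {t u : Lm} : NeV t → NeV u → NeV (Lm.esub t u)
  /-- CBV normal terms -/
  inductive NoV : Lm → Prop
    | lam (t : Lm) : NoV (Lm.lam t)
    | vr {t : Lm} : VrV t → NoV t
    | ne {t : Lm} : NeV t → NoV t
    | esub {t u : Lm} : NoV t → NeV u → NoV (Lm.esub t u)
end

/-- counted CBN reduction, recording the number of dB- and s-steps -/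
inductive RedCntN : Lm → ℕ × ℕ → Lm → Prop
  | refl (t : Lm) : RedCntN t (0, 0) t
  | db {t t₁ u : Lm} {b e : ℕ} :
      StepN .dB t t₁ → RedCntN t₁ (b, e) u → RedCntN t (b + 1, e) u
  | s {t t₁ u : Lm} {b e : ℕ} :
      StepN .s t t₁ → RedCntN t₁ (b, e) u → RedCntN t (b, e + 1) u

/-- counted CBV reduction, recording the number of dB- and sv-steps -/
inductive RedCntV : Lm → ℕ × ℕ → Lm → Prop
  | refl (t : Lm) : RedCntV t (0, 0) t
  | db {t t₁ u : Lm} {b e : ℕ} :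
      StepV .dB t t₁ → RedCntV t₁ (b, e) u → RedCntV t (b + 1, e) u
  | sv {t t₁ u : Lm} {b e : ℕ} :
      StepV .sv t t₁ → RedCntV t₁ (b, e) u → RedCntV t (b, e + 1) u

/-- the CBN embedding into the λ!-calculus -/
def cbn : Lm → Tm
  | .var k => .var k
  | .lam t => .lam (cbn t)
  | .app t u => .app (cbn t) (.bang (cbn u))
  | .esub t u => .esub (cbn t) (.bang (cbn u))

/-- `deBang t = some s'` iff `t = L⟨!s⟩` and `s' = L⟨s⟩` -/
def deBang : Tm → Option Tm
  | .bang s => some s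
  | .esub t e => (deBang t).map (fun s => Tm.esub s e)
  | _ => none

/-- the CBV embedding into the λ!-calculus -/
def cbv : Lm → Tm
  | .var k => .bang (.var k)
  | .lam t => .bang (.lam (cbv t))
  | .app t u =>
      match deBang (cbv t) with
      | some r => Tm.app r (cbv u)
      | none => Tm.app (.der (cbv t)) (cbv u)
  | .esub t u => .esub (cbv t) (cbv u)

/-- Sized typing of system 𝒩 (call-by-name): `DerN Γ t τ n` means that there
is a derivation of `Γ ⊢ t : τ` of size `n` (counting all rules). -/
inductive DerN : Ctx → Lm → Ty → ℕ → Prop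
  | ax (k : ℕ) (σ : Ty) : DerN (Ctx.single k {σ}) (Lm.var k) σ 1
  | app {Γ : Ctx} {t u : Lm} {τ : Ty} {n : ℕ} (prs : List (Ctx × Ty × ℕ)) :
      DerN Γ t (Ty.arr (prs.map (·.2.1)) τ) n →
      (∀ p ∈ prs, DerN p.1 u p.2.1 p.2.2) →
      DerN (Γ + (prs.map (·.1)).sum) (Lm.app t u) τ
           (n + (prs.map (·.2.2)).sum + 1)
  | abs {Γ : Ctx} {t : Lm} {τ : Ty} {n : ℕ} (M : List Ty) :
      DerN Γ t τ n → Multiset.ofList M = Γ 0 →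
      DerN (Ctx.tail Γ) (Lm.lam t) (Ty.arr M τ) (n + 1)
  | es {Γ : Ctx} {t u : Lm} {τ : Ty} {n : ℕ} (prs : List (Ctx × Ty × ℕ)) :
      DerN Γ t τ n →
      Multiset.ofList (prs.map (·.2.1)) = Γ 0 →
      (∀ p ∈ prs, DerN p.1 u p.2.1 p.2.2) →
      DerN (Ctx.tail Γ + (prs.map (·.1)).sum) (Lm.esub t u) τ
           (n + (prs.map (·.2.2)).sum + 1)

/-- Sized typing of system 𝒱 (call-by-value): `DerV Γ t τ n` means that there
is a derivation of `Γ ⊢ t : τ` of size `n` (each rule counts 1, except that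
`ax` counts the cardinal of its multiset and `abs` contributes the sizes of
its premises plus the number of premises). -/
inductive DerV : Ctx → Lm → Ty → ℕ → Prop
  | ax (k : ℕ) (M : List Ty) :
      DerV (Ctx.single k (Multiset.ofList M)) (Lm.var k) (Ty.mult M) M.length
  | es {Γ Δ : Ctx} {t u : Lm} {σ : Ty} {M : List Ty} {n m : ℕ} :
      DerV Γ t σ n → DerV Δ u (Ty.mult M) m → Multiset.ofList M = Γ 0 →
      DerV (Ctx.tail Γ + Δ) (Lm.esub t u) σ (n + m + 1)
  | abs {t : Lm} (prs : List (Ctx × List Ty × Ty × ℕ)) :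
      (∀ p ∈ prs, DerV p.1 t p.2.2.1 p.2.2.2) →
      (∀ p ∈ prs, Multiset.ofList p.2.1 = p.1 0) →
      DerV ((prs.map (fun p => Ctx.tail p.1)).sum) (Lm.lam t)
           (Ty.mult (prs.map (fun p => Ty.arr p.2.1 p.2.2.1)))
           ((prs.map (·.2.2.2)).sum + prs.length)
  | app {Γ Δ : Ctx} {t u : Lm} {M : List Ty} {τ : Ty} {n m : ℕ} :
      DerV Γ t (Ty.mult [Ty.arr M τ]) n → DerV Δ u (Ty.mult M) m →
      DerV (Γ + Δ) (Lm.app t u) τ (n + m + 1)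

/-! ## Auxiliary lemmas for the typed embeddings -/

section Aux

lemma list_choice {A B : Type _} (l : List A) (F : A → B → Prop)
    (h : ∀ a ∈ l, ∃ b, F a b) :
    ∃ m : List (A × B), m.map Prod.fst = l ∧ ∀ p ∈ m, F p.1 p.2 := by
  induction l with
  | nil => exact ⟨[], rfl, by simp⟩
  | cons a l ih =>
    obtain ⟨b, hb⟩ := h a (by simp)
    obtain ⟨m, hm1, hm2⟩ := ih (fun a ha => h a (by simp [ha]))
    refine ⟨(a, b) :: m, by simp [hm1], ?_⟩
    rintro p hp
    rcases List.mem_cons.mp hp with rfl | hp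
    · exact hb
    · exact hm2 p hp

lemma resize_gen {A : Type _} (l : List A) (f : A → Ctx) (g : A → Ty)
    (P : Ctx → Ty → ℕ → Prop) (h : ∀ a ∈ l, ∃ n, P (f a) (g a) n) :
    ∃ prs : List (Ctx × Ty × ℕ), prs.map (·.1) = l.map f ∧
      prs.map (·.2.1) = l.map g ∧ ∀ p ∈ prs, P p.1 p.2.1 p.2.2 := by
  obtain ⟨m, hm1, hm2⟩ := list_choice l (fun a n => P (f a) (g a) n) h
  refine ⟨m.map (fun p => (f p.1, g p.1, p.2)), ?_, ?_, ?_⟩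
  · rw [← hm1]; simp [List.map_map, Function.comp]
  · rw [← hm1]; simp [List.map_map, Function.comp]
  · intro p hp
    obtain ⟨q, hq, rfl⟩ := List.mem_map.mp hp
    exact hm2 q hq

lemma single_add (k : ℕ) (M N : Multiset Ty) :
    Ctx.single k M + Ctx.single k N = Ctx.single k (M + N) := by
  funext j
  by_cases hj : j = k <;> simp [Ctx.single, hj, Pi.add_apply]

lemma sum_singles {k : ℕ} (prs : List (Ctx × Ty × ℕ))
    (h : ∀ p ∈ prs, p.1 = Ctx.single k {p.2.1}) :
    (prs.map (·.1)).sum = Ctx.single k (Multiset.ofList (prs.map (·.2.1))) := by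
  induction prs with
  | nil => funext j; simp [Ctx.single]
  | cons p ps ih =>
    have hp := h p (by simp)
    have hps := ih (fun q hq => h q (by simp [hq]))
    simp only [List.map_cons, List.sum_cons, hp, hps, single_add]
    congr 1

lemma singles_sum (k : ℕ) (M : List Ty) :
    (M.map (fun σ => Ctx.single k ({σ} : Multiset Ty))).sum
      = Ctx.single k (Multiset.ofList M) := by
  induction M with
  | nil => funext j; simp [Ctx.single]
  | cons σ M ih =>
    simp only [List.map_cons, List.sum_cons, ih, single_add]
    congr 1

lemma bg1 {Γ : Ctx} {t : Tm} {σ : Ty} {n : ℕ} (h : DerU Γ t σ n) :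
    ∃ m, DerU Γ (Tm.bang t) (Ty.mult [σ]) m := by
  have hb := DerU.bg [(Γ, σ, n)] (by
    rintro p hp
    simp only [List.mem_singleton] at hp
    subst hp
    exact h)
  simp only [List.map_cons, List.map_nil, List.sum_cons, List.sum_nil, add_zero] at hb
  exact ⟨_, hb⟩

lemma ax_inv {Γ : Ctx} {k : ℕ} {σ : Ty} {n : ℕ} (h : DerU Γ (Tm.var k) σ n) :
    Γ = Ctx.single k {σ} := by cases h; rfl

lemma bg_inv {Γ : Ctx} {t : Tm} {M : List Ty} {n : ℕ}
    (h : DerU Γ (Tm.bang t) (Ty.mult M) n) :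
    ∃ prs : List (Ctx × Ty × ℕ), Γ = (prs.map (·.1)).sum ∧
      M = prs.map (·.2.1) ∧ ∀ p ∈ prs, DerU p.1 t p.2.1 p.2.2 := by
  cases h with
  | bg prs hall => exact ⟨prs, rfl, rfl, hall⟩

lemma bg_inv1 {Γ : Ctx} {t : Tm} {σ : Ty} {n : ℕ}
    (h : DerU Γ (Tm.bang t) (Ty.mult [σ]) n) : ∃ m, DerU Γ t σ m := by
  obtain ⟨prs, hΓ, hM, hall⟩ := bg_inv h
  match prs, hM with
  | [p], hM =>
    refine ⟨p.2.2, ?_⟩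
    have hd := hall p (by simp)
    have hσ : p.2.1 = σ := by simpa using hM.symm
    subst hΓ
    rw [← hσ]
    simpa using hd

lemma deBang_sound : ∀ (s : Tm) {r : Tm}, deBang s = some r →
    ∀ {Γ : Ctx} {σ : Ty} {n : ℕ}, DerU Γ s (Ty.mult [σ]) n → ∃ m, DerU Γ r σ m := by
  intro s
  induction s with
  | bang s _ =>
    intro r hr Γ σ n h
    simp only [deBang, Option.some.injEq] at hr
    subst hr
    exact bg_inv1 h
  | esub s e ihs _ =>
    intro r hr Γ σ n h
    simp only [deBang, Option.map_eq_some_iff] at hr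
    obtain ⟨r₁, h1, h2⟩ := hr
    subst h2
    cases h with
    | es ht hu hM =>
      obtain ⟨m, hm⟩ := ihs h1 ht
      exact ⟨_, DerU.es hm hu hM⟩
  | var k => intro r hr; simp [deBang] at hr
  | app _ _ _ _ => intro r hr; simp [deBang] at hr
  | lam _ _ => intro r hr; simp [deBang] at hr
  | der _ _ => intro r hr; simp [deBang] at hr

lemma deBang_complete : ∀ (s : Tm) {r : Tm}, deBang s = some r →
    ∀ {Γ : Ctx} {σ : Ty} {n : ℕ}, DerU Γ r σ n → ∃ m, DerU Γ s (Ty.mult [σ]) m := by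
  intro s
  induction s with
  | bang s _ =>
    intro r hr Γ σ n h
    simp only [deBang, Option.some.injEq] at hr
    subst hr
    exact bg1 h
  | esub s e ihs _ =>
    intro r hr Γ σ n h
    simp only [deBang, Option.map_eq_some_iff] at hr
    obtain ⟨r₁, h1, h2⟩ := hr
    subst h2
    cases h with
    | es ht hu hM =>
      obtain ⟨m, hm⟩ := ihs h1 ht
      exact ⟨_, DerU.es hm hu hM⟩
  | var k => intro r hr; simp [deBang] at hr
  | app _ _ _ _ => intro r hr; simp [deBang] at hr
  | lam _ _ => intro r hr; simp [deBang] at hr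
  | der _ _ => intro r hr; simp [deBang] at hr

lemma cbv_app_eq (t u : Lm) : cbv (Lm.app t u) =
    match deBang (cbv t) with
    | some r => Tm.app r (cbv u)
    | none => Tm.app (Tm.der (cbv t)) (cbv u) := rfl

lemma cbv_app_some {t : Lm} {r : Tm} (u : Lm) (h : deBang (cbv t) = some r) :
    cbv (Lm.app t u) = Tm.app r (cbv u) := by rw [cbv_app_eq, h]

lemma cbv_app_none {t : Lm} (u : Lm) (h : deBang (cbv t) = none) :
    cbv (Lm.app t u) = Tm.app (Tm.der (cbv t)) (cbv u) := by rw [cbv_app_eq, h]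

theorem cbn_iff (t : Lm) : ∀ (Γ : Ctx) (σ : Ty),
    (∃ n, DerN Γ t σ n) ↔ (∃ n, DerU Γ (cbn t) σ n) := by
  induction t with
  | var k =>
    intro Γ σ
    constructor
    · rintro ⟨n, h⟩; cases h; exact ⟨_, DerU.ax k σ⟩
    · rintro ⟨n, h⟩; cases h; exact ⟨_, DerN.ax k σ⟩
  | lam t ih =>
    intro Γ σ
    constructor
    · rintro ⟨n, h⟩
      cases h with
      | abs M hd hM =>
        obtain ⟨m, hm⟩ := (ih _ _).1 ⟨_, hd⟩
        exact ⟨_, DerU.abs M hm hM⟩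
    · rintro ⟨n, h⟩
      cases h with
      | abs M hd hM =>
        obtain ⟨m, hm⟩ := (ih _ _).2 ⟨_, hd⟩
        exact ⟨_, DerN.abs M hm hM⟩
  | app t u iht ihu =>
    intro Γ σ
    constructor
    · rintro ⟨n, h⟩
      cases h with
      | app prs hd hall =>
        obtain ⟨m, hm⟩ := (iht _ _).1 ⟨_, hd⟩
        obtain ⟨prs', h1, h2, h3⟩ := resize_gen prs (·.1) (·.2.1)
          (fun Γ τ n => DerU Γ (cbn u) τ n) (fun p hp => (ihu _ _).1 ⟨_, hall p hp⟩)
        have hb := DerU.bg prs' h3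
        rw [h1, h2] at hb
        exact ⟨_, DerU.app hm hb⟩
    · rintro ⟨n, h⟩
      simp only [cbn] at h
      cases h with
      | app hd hb =>
        cases hb with
        | bg prs hall =>
          obtain ⟨m, hm⟩ := (iht _ _).2 ⟨_, hd⟩
          obtain ⟨prs', h1, h2, h3⟩ := resize_gen prs (·.1) (·.2.1)
            (fun Γ τ n => DerN Γ u τ n) (fun p hp => (ihu _ _).2 ⟨_, hall p hp⟩)
          rw [← h2] at hm
          rw [← h1]
          exact ⟨_, DerN.app prs' hm h3⟩
  | esub t u iht ihu =>
    intro Γ σ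
    constructor
    · rintro ⟨n, h⟩
      cases h with
      | es prs hd hM hall =>
        obtain ⟨m, hm⟩ := (iht _ _).1 ⟨_, hd⟩
        obtain ⟨prs', h1, h2, h3⟩ := resize_gen prs (·.1) (·.2.1)
          (fun Γ τ n => DerU Γ (cbn u) τ n) (fun p hp => (ihu _ _).1 ⟨_, hall p hp⟩)
        have hb := DerU.bg prs' h3
        rw [h1, h2] at hb
        exact ⟨_, DerU.es hm hb hM⟩
    · rintro ⟨n, h⟩
      simp only [cbn] at h
      cases h with
      | es hd hb hM =>
        cases hb with
        | bg prs hall =>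
          obtain ⟨m, hm⟩ := (iht _ _).2 ⟨_, hd⟩
          obtain ⟨prs', h1, h2, h3⟩ := resize_gen prs (·.1) (·.2.1)
            (fun Γ τ n => DerN Γ u τ n) (fun p hp => (ihu _ _).2 ⟨_, hall p hp⟩)
          rw [← h1]
          rw [← h2] at hM
          exact ⟨_, DerN.es prs' hm hM h3⟩

theorem cbv_iff (t : Lm) : ∀ (Γ : Ctx) (σ : Ty),
    (∃ n, DerV Γ t σ n) ↔ (∃ n, DerU Γ (cbv t) σ n) := by
  induction t with
  | var k =>
    intro Γ σ
    constructor
    · rintro ⟨n, h⟩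
      cases h with
      | ax _ M =>
        obtain ⟨prs', h1, h2, h3⟩ := resize_gen M (fun σ => Ctx.single k {σ}) id
          (fun Γ τ n => DerU Γ (Tm.var k) τ n) (fun σ _ => ⟨1, DerU.ax k σ⟩)
        have hb := DerU.bg prs' h3
        rw [h1, h2, singles_sum, List.map_id] at hb
        exact ⟨_, hb⟩
    · rintro ⟨n, h⟩
      simp only [cbv] at h
      cases h with
      | bg prs hall =>
        have hs : ∀ p ∈ prs, p.1 = Ctx.single k {p.2.1} :=
          fun p hp => ax_inv (hall p hp)
        rw [sum_singles prs hs]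
        exact ⟨_, DerV.ax k (prs.map (·.2.1))⟩
  | lam t ih =>
    intro Γ σ
    constructor
    · rintro ⟨n, h⟩
      cases h with
      | abs prs hall hM =>
        obtain ⟨prs', h1, h2, h3⟩ := resize_gen prs (fun p => Ctx.tail p.1)
          (fun p => Ty.arr p.2.1 p.2.2.1)
          (fun Γ τ n => DerU Γ (Tm.lam (cbv t)) τ n)
          (fun p hp => by
            obtain ⟨m, hm⟩ := (ih p.1 p.2.2.1).1 ⟨_, hall p hp⟩
            exact ⟨_, DerU.abs p.2.1 hm (hM p hp)⟩)
        have hb := DerU.bg prs' h3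
        rw [h1, h2] at hb
        exact ⟨_, hb⟩
    · rintro ⟨n, h⟩
      simp only [cbv] at h
      cases h with
      | bg prs hall =>
        have hstep : ∀ p ∈ prs, ∃ q : Ctx × List Ty × Ty × ℕ,
            p.1 = Ctx.tail q.1 ∧ p.2.1 = Ty.arr q.2.1 q.2.2.1 ∧
            DerV q.1 t q.2.2.1 q.2.2.2 ∧ Multiset.ofList q.2.1 = q.1 0 := by
          intro p hp
          obtain ⟨Γp, τp, np⟩ := p
          have h := hall _ hp
          cases h with
          | abs M hd hM =>
            obtain ⟨m, hm⟩ := (ih _ _).2 ⟨_, hd⟩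
            exact ⟨(_, M, _, m), rfl, rfl, hm, hM⟩
        obtain ⟨ml, hm1, hm2⟩ := list_choice prs _ hstep
        have habs := DerV.abs (ml.map Prod.snd)
          (fun q hq => by
            obtain ⟨p, hp, rfl⟩ := List.mem_map.mp hq
            exact (hm2 p hp).2.2.1)
          (fun q hq => by
            obtain ⟨p, hp, rfl⟩ := List.mem_map.mp hq
            exact (hm2 p hp).2.2.2)
        have e1 : (ml.map Prod.snd).map (fun q => Ctx.tail q.1) = prs.map (·.1) := by
          rw [← hm1]
          simp only [List.map_map]
          exact List.map_congr_left (fun p hp => ((hm2 p hp).1).symm)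
        have e2 : (ml.map Prod.snd).map (fun q => Ty.arr q.2.1 q.2.2.1)
            = prs.map (·.2.1) := by
          rw [← hm1]
          simp only [List.map_map]
          exact List.map_congr_left (fun p hp => ((hm2 p hp).2.1).symm)
        rw [e1, e2] at habs
        exact ⟨_, habs⟩
  | app t u iht ihu =>
    intro Γ σ
    constructor
    · rintro ⟨n, h⟩
      cases h with
      | app hd hu =>
        obtain ⟨m1, h1⟩ := (iht _ _).1 ⟨_, hd⟩
        obtain ⟨m2, h2⟩ := (ihu _ _).1 ⟨_, hu⟩
        cases hdb : deBang (cbv t) with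
        | none =>
          rw [show (∃ n, DerU _ (cbv (Lm.app t u)) _ n) ↔ _ from
            Iff.of_eq (by rw [cbv_app_none u hdb])]
          exact ⟨_, DerU.app (DerU.dr h1) h2⟩
        | some r =>
          obtain ⟨m, hm⟩ := deBang_sound _ hdb h1
          rw [cbv_app_some u hdb]
          exact ⟨_, DerU.app hm h2⟩
    · rintro ⟨n, h⟩
      cases hdb : deBang (cbv t) with
      | none =>
        rw [cbv_app_none u hdb] at h
        cases h with
        | app hd hu =>
          cases hd with
          | dr hd' =>
            obtain ⟨m1, h1⟩ := (iht _ _).2 ⟨_, hd'⟩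
            obtain ⟨m2, h2⟩ := (ihu _ _).2 ⟨_, hu⟩
            exact ⟨_, DerV.app h1 h2⟩
      | some r =>
        rw [cbv_app_some u hdb] at h
        cases h with
        | app hd hu =>
          obtain ⟨m, hm⟩ := deBang_complete _ hdb hd
          obtain ⟨m1, h1⟩ := (iht _ _).2 ⟨_, hm⟩
          obtain ⟨m2, h2⟩ := (ihu _ _).2 ⟨_, hu⟩
          exact ⟨_, DerV.app h1 h2⟩
  | esub t u iht ihu =>
    intro Γ σ
    constructor
    · rintro ⟨n, h⟩
      cases h with
      | es hd hu hM =>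
        obtain ⟨m1, h1⟩ := (iht _ _).1 ⟨_, hd⟩
        obtain ⟨m2, h2⟩ := (ihu _ _).1 ⟨_, hu⟩
        exact ⟨_, DerU.es h1 h2 hM⟩
    · rintro ⟨n, h⟩
      simp only [cbv] at h
      cases h with
      | es hd hu hM =>
        obtain ⟨m1, h1⟩ := (iht _ _).2 ⟨_, hd⟩
        obtain ⟨m2, h2⟩ := (ihu _ _).2 ⟨_, hu⟩
        exact ⟨_, DerV.es h1 h2 hM⟩

end Aux

/-- **Soundness and completeness of the typed embeddings** (Theorem 4):
`Γ ⊢ t : σ` is derivable in system 𝒩 iff `Γ ⊢ cbn t : σ` is derivable in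
system 𝒰, and `Γ ⊢ t : σ` is derivable in system 𝒱 iff `Γ ⊢ cbv t : σ` is
derivable in system 𝒰. -/
theorem typed_embeddings (t : Lm) (Γ : Ctx) (σ : Ty) :
    ((∃ n : ℕ, DerN Γ t σ n) ↔ (∃ n : ℕ, DerU Γ (cbn t) σ n)) ∧
    ((∃ n : ℕ, DerV Γ t σ n) ↔ (∃ n : ℕ, DerU Γ (cbv t) σ n)) := by
  exact ⟨cbn_iff t Γ σ, cbv_iff t Γ σ⟩
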